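/- Let n ≥ 3 and m ≥ 2 be integers with log(n)/log(m) irrational, and suppose 1/n is m-far. Then the measure μ from the construction (n-adic doubling, with weights a·b^ℓ to the left of ℓ + 1/n and 1 to the right at scale n^{-ℓ-1}) is not m-adic doubling: for every C there exist an m-adic interval J and two m-adic children J₁, J₂ of J with μ(J₁)/μ(J₂) > C. -/

import Mathlib

open MeasureTheory
open scoped Classical

/-- The density of the constructed measure. For `x < 0` it is `1` (Lebesgue). For `x ≥ 0`
with `x ∈ [ℓ, ℓ+1)`, `ℓ ∈ ℕ`, the redistribution (multiplying the density by `a` on the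
leftmost `n`-adic child and by `b` on the rightmost `n`-adic child of every previously
modified interval) is iterated `ℓ + 1` times: in terms of the base-`n` digits
`d_i = ⌊(x - ℓ)·n^(i+1)⌋ mod n` of the fractional part, the density is the product over
`i < ℓ + 1` of `a` (if `d_i = 0`), `b` (if `d_i = n-1`) as long as all previous digits lie
in `{0, n-1}`, and `1` otherwise. -/
noncomputable def constrDens (n : ℕ) (a b : ℝ) (x : ℝ) : ℝ :=
  if x < 0 then 1 else
    ∏ i ∈ Finset.range (⌊x⌋.toNat + 1),
      if ∀ j < i, (⌊Int.fract x * (n : ℝ) ^ (j + 1)⌋ % n = 0 ∨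
          ⌊Int.fract x * (n : ℝ) ^ (j + 1)⌋ % n = (n : ℤ) - 1)
      then (if ⌊Int.fract x * (n : ℝ) ^ (i + 1)⌋ % n = 0 then a
            else if ⌊Int.fract x * (n : ℝ) ^ (i + 1)⌋ % n = (n : ℤ) - 1 then b else 1)
      else 1

/-- The constructed measure: Lebesgue measure on `(-∞, 0)`, with the redistributed weights
on `[0, ∞)`. -/
noncomputable def constrMeasure (n : ℕ) (a b : ℝ) : Measure ℝ :=
  volume.withDensity fun x => ENNReal.ofReal (constrDens n a b x)

/-- The `j`-th `n`-adic child (`1 ≤ j ≤ n`) of the `n`-adic interval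
`[(k-1)/n^ℓ, k/n^ℓ)`. -/
noncomputable def adicChild (n : ℕ) (ℓ k : ℤ) (j : ℕ) : Set ℝ :=
  Set.Ico (((k : ℝ) - 1) / (n : ℝ) ^ ℓ + ((j : ℝ) - 1) / (n : ℝ) ^ (ℓ + 1))
    (((k : ℝ) - 1) / (n : ℝ) ^ ℓ + (j : ℝ) / (n : ℝ) ^ (ℓ + 1))

/-- A measure `μ` on `ℝ` is `n`-adic doubling if there is `C > 0` such that for every
`n`-adic interval and any two of its `n`-adic children the ratio of the `μ`-measures lies
in `[1/C, C]`. -/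
def IsAdicDoubling (n : ℕ) (μ : Measure ℝ) : Prop :=
  ∃ C : ℝ, 0 < C ∧ ∀ (ℓ k : ℤ) (j₁ j₂ : ℕ), 1 ≤ j₁ → j₁ ≤ n → 1 ≤ j₂ → j₂ ≤ n →
    1 / C ≤ (μ (adicChild n ℓ k j₁)).toReal / (μ (adicChild n ℓ k j₂)).toReal ∧
      (μ (adicChild n ℓ k j₁)).toReal / (μ (adicChild n ℓ k j₂)).toReal ≤ C

/-- A real number `δ` is `m`-far if there exists `C > 0` such that
`|δ - k/m^s| ≥ C/m^s` for all integers `s ≥ 0` and `k ∈ ℤ`. -/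
def IsNFar (m : ℕ) (δ : ℝ) : Prop :=
  ∃ C : ℝ, 0 < C ∧ ∀ (s : ℕ) (k : ℤ), C / (m : ℝ) ^ s ≤ |δ - (k : ℝ) / (m : ℝ) ^ s|

/- ## Auxiliary lemmas -/

lemma emod_pow_sub_one {n : ℤ} (hn : 2 ≤ n) {j : ℕ} (hj : 1 ≤ j) :
    (n ^ j - 1) % n = n - 1 := by
  obtain ⟨c, hc⟩ : n ∣ n ^ j := dvd_pow_self n (by omega)
  have h2 : n ^ j - 1 = (n - 1) + n * (c - 1) := by rw [hc]; ring
  rw [h2, Int.add_mul_emod_self_left, Int.emod_eq_of_lt (by omega) (by omega)]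

lemma densRight (n : ℕ) (hn : 3 ≤ n) (a b : ℝ) (ℓ : ℕ) (x : ℝ)
    (h1 : (ℓ : ℝ) + 1 / n ≤ x) (h2 : x < (ℓ : ℝ) + 1 / n + 1 / (n : ℝ) ^ (ℓ + 1)) :
    constrDens n a b x = 1 := by
  have hn3 : (3 : ℝ) ≤ (n : ℝ) := by exact_mod_cast hn
  have hn0 : (0 : ℝ) < n := by linarith
  have hpow : (0 : ℝ) < (n : ℝ) ^ (ℓ + 1) := pow_pos hn0 _
  have hnle : (n : ℝ) ≤ (n : ℝ) ^ (ℓ + 1) := by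
    calc (n:ℝ) = (n:ℝ)^1 := (pow_one _).symm
    _ ≤ (n:ℝ)^(ℓ+1) := pow_le_pow_right₀ (by linarith) (by omega)
  have hfr : (1 : ℝ) / (n : ℝ) ^ (ℓ + 1) ≤ 1 / n :=
    one_div_le_one_div_of_le hn0 hnle
  have h1n : (0:ℝ) < 1 / n := by positivity
  have h1n3 : (1:ℝ)/n ≤ 1/3 := by
    apply one_div_le_one_div_of_le <;> linarith
  have hx0 : ¬ x < 0 := by
    push_neg; have : (0:ℝ) ≤ (ℓ:ℝ) := Nat.cast_nonneg ℓ; linarith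
  have hfloor : ⌊x⌋ = (ℓ : ℤ) := by
    rw [Int.floor_eq_iff]
    constructor
    · push_cast; linarith
    · push_cast; linarith
  have hfract : Int.fract x = x - ℓ := by
    rw [Int.fract, hfloor]; norm_num
  have hd0 : ⌊Int.fract x * (n : ℝ) ^ (0 + 1)⌋ = 1 := by
    rw [hfract, Int.floor_eq_iff]
    have e1 : (1/(n:ℝ)) * n = 1 := by field_simp
    have e2 : (x - ℓ) * n ≥ (1/(n:ℝ)) * n :=
      mul_le_mul_of_nonneg_right (by linarith) (by linarith)
    have e3 : (x - ℓ) * n < (1/(n:ℝ) + 1/(n:ℝ)^(ℓ+1)) * n :=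
      mul_lt_mul_of_pos_right (by linarith) (by linarith)
    have e4 : (1/(n:ℝ) + 1/(n:ℝ)^(ℓ+1)) * n ≤ (2/(n:ℝ)) * n := by
      apply mul_le_mul_of_nonneg_right _ (by linarith)
      have h2n : (2:ℝ)/n = 1/n + 1/n := by ring
      linarith [hfr]
    have e5 : (2/(n:ℝ)) * n = 2 := by field_simp
    constructor
    · push_cast
      simp only [pow_one]
      linarith
    · push_cast
      simp only [pow_one]
      linarith
  have hd0m : ⌊Int.fract x * (n : ℝ) ^ (0 + 1)⌋ % (n:ℤ) = 1 := by
    rw [hd0]; exact Int.emod_eq_of_lt (by norm_num) (by exact_mod_cast by omega : (1:ℤ) < n)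
  rw [constrDens, if_neg hx0]
  apply Finset.prod_eq_one
  intro i _
  rcases Nat.eq_zero_or_pos i with h0 | hpos
  · subst h0
    rw [if_pos (by intro j hj; exact absurd hj (Nat.not_lt_zero j))]
    rw [if_neg, if_neg]
    · rw [hd0m]; intro h; have : (2:ℤ) ≤ (n:ℤ) - 1 := by omega
      omega
    · rw [hd0m]; norm_num
  · rw [if_neg]
    intro hc
    have := hc 0 hpos
    rw [hd0m] at this
    rcases this with h | h
    · norm_num at h
    · have : (3:ℤ) ≤ (n:ℤ) := by exact_mod_cast hn
      omega

lemma densLeft (n : ℕ) (hn : 3 ≤ n) (a b : ℝ) (ℓ : ℕ) (x : ℝ)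
    (h1 : (ℓ : ℝ) + 1 / n - 1 / (n : ℝ) ^ (ℓ + 1) ≤ x) (h2 : x < (ℓ : ℝ) + 1 / n) :
    constrDens n a b x = a * b ^ ℓ := by
  have hn3 : (3 : ℝ) ≤ (n : ℝ) := by exact_mod_cast hn
  have hn0 : (0 : ℝ) < n := by linarith
  have hpow : (0 : ℝ) < (n : ℝ) ^ (ℓ + 1) := pow_pos hn0 _
  have hnle : (n : ℝ) ≤ (n : ℝ) ^ (ℓ + 1) := by
    calc (n:ℝ) = (n:ℝ)^1 := (pow_one _).symm
    _ ≤ (n:ℝ)^(ℓ+1) := pow_le_pow_right₀ (by linarith) (by omega)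
  have hfr : (1 : ℝ) / (n : ℝ) ^ (ℓ + 1) ≤ 1 / n :=
    one_div_le_one_div_of_le hn0 hnle
  have h1n : (0:ℝ) < 1 / n := by positivity
  have h1n3 : (1:ℝ)/n ≤ 1/3 := by
    apply one_div_le_one_div_of_le <;> linarith
  have hx0 : ¬ x < 0 := by
    push_neg
    have h0 : (0:ℝ) ≤ (ℓ:ℝ) := Nat.cast_nonneg ℓ
    linarith
  have hfloor : ⌊x⌋ = (ℓ : ℤ) := by
    rw [Int.floor_eq_iff]
    constructor
    · push_cast; linarith
    · push_cast; linarith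
  have hfract : Int.fract x = x - ℓ := by
    rw [Int.fract, hfloor]; norm_num
  have hdig : ∀ j : ℕ, j ≤ ℓ → ⌊Int.fract x * (n : ℝ) ^ (j + 1)⌋ = (n:ℤ) ^ j - 1 := by
    intro j hj
    have hpj : (0:ℝ) < (n:ℝ) ^ (j+1) := pow_pos hn0 _
    have hple : (n:ℝ) ^ (j+1) ≤ (n:ℝ) ^ (ℓ+1) := pow_le_pow_right₀ (by linarith) (by omega)
    rw [hfract, Int.floor_eq_iff]
    have e1 : (1/(n:ℝ)) * (n:ℝ)^(j+1) = (n:ℝ)^j := by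
      rw [pow_succ]; field_simp
    have e2 : (1/(n:ℝ)^(ℓ+1)) * (n:ℝ)^(j+1) ≤ 1 := by
      rw [div_mul_eq_mul_div, one_mul, div_le_one hpow]; exact hple
    have e3 : (x - ℓ) * (n:ℝ)^(j+1) ≥ (1/(n:ℝ) - 1/(n:ℝ)^(ℓ+1)) * (n:ℝ)^(j+1) :=
      mul_le_mul_of_nonneg_right (by linarith) (le_of_lt hpj)
    have e4 : (x - ℓ) * (n:ℝ)^(j+1) < (1/(n:ℝ)) * (n:ℝ)^(j+1) :=
      mul_lt_mul_of_pos_right (by linarith) hpj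
    constructor
    · push_cast
      nlinarith [e3, e1, e2]
    · push_cast
      linarith [e4, e1]
  have hd0m : ⌊Int.fract x * (n : ℝ) ^ (0 + 1)⌋ % (n:ℤ) = 0 := by
    rw [hdig 0 (Nat.zero_le ℓ)]; norm_num
  have hdjm : ∀ j : ℕ, 1 ≤ j → j ≤ ℓ → ⌊Int.fract x * (n : ℝ) ^ (j + 1)⌋ % (n:ℤ) = (n:ℤ) - 1 := by
    intro j hj1 hj2
    rw [hdig j hj2]
    exact emod_pow_sub_one (by exact_mod_cast by omega : (2:ℤ) ≤ n) hj1
  have hnz : (n:ℤ) - 1 ≠ 0 := by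
    have : (3:ℤ) ≤ n := by exact_mod_cast hn
    omega
  rw [constrDens, if_neg hx0, hfloor, Int.toNat_natCast]
  rw [Finset.prod_range_succ']
  have hf0 : (if ∀ j < 0, (⌊Int.fract x * (n : ℝ) ^ (j + 1)⌋ % n = 0 ∨
          ⌊Int.fract x * (n : ℝ) ^ (j + 1)⌋ % n = (n : ℤ) - 1)
      then (if ⌊Int.fract x * (n : ℝ) ^ (0 + 1)⌋ % n = 0 then a
            else if ⌊Int.fract x * (n : ℝ) ^ (0 + 1)⌋ % n = (n : ℤ) - 1 then b else 1)
      else 1) = a := by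
    rw [if_pos (fun j hj => absurd hj (Nat.not_lt_zero j)), if_pos hd0m]
  rw [hf0]
  have hfi : ∀ i ∈ Finset.range ℓ, (if ∀ j < i + 1, (⌊Int.fract x * (n : ℝ) ^ (j + 1)⌋ % n = 0 ∨
          ⌊Int.fract x * (n : ℝ) ^ (j + 1)⌋ % n = (n : ℤ) - 1)
      then (if ⌊Int.fract x * (n : ℝ) ^ (i + 1 + 1)⌋ % n = 0 then a
            else if ⌊Int.fract x * (n : ℝ) ^ (i + 1 + 1)⌋ % n = (n : ℤ) - 1 then b else 1)
      else 1) = b := by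
    intro i hi
    have hiℓ : i < ℓ := Finset.mem_range.mp hi
    have hcond : ∀ j < i + 1, (⌊Int.fract x * (n : ℝ) ^ (j + 1)⌋ % n = 0 ∨
          ⌊Int.fract x * (n : ℝ) ^ (j + 1)⌋ % n = (n : ℤ) - 1) := by
      intro j hj
      rcases Nat.eq_zero_or_pos j with h0 | hpos
      · subst h0; exact Or.inl hd0m
      · exact Or.inr (hdjm j hpos (by omega))
    rw [if_pos hcond]
    rw [hdjm (i+1) (by omega) (by omega)]
    rw [if_neg hnz, if_pos rfl]
  rw [Finset.prod_congr rfl hfi, Finset.prod_const, Finset.card_range]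
  ring

lemma measIcoConst (n : ℕ) (a b : ℝ) {α β c : ℝ}
    (h : ∀ x ∈ Set.Ico α β, constrDens n a b x = c) :
    constrMeasure n a b (Set.Ico α β) = ENNReal.ofReal c * ENNReal.ofReal (β - α) := by
  rw [constrMeasure, withDensity_apply _ measurableSet_Ico]
  rw [setLIntegral_congr_fun measurableSet_Ico
    ((fun x hx => by rw [h x hx] : ∀ x, x ∈ Set.Ico α β →
      ENNReal.ofReal (constrDens n a b x) = ENNReal.ofReal c))]
  rw [setLIntegral_const, Real.volume_Ico]

lemma goodScale (m : ℕ) (hm : 2 ≤ m) (p Cf : ℝ) (hCf : 0 < Cf)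
    (key : ∀ (s : ℕ) (K : ℤ), Cf ≤ |(m:ℝ)^s * p - K|) (s₀ : ℕ) :
    ∃ s, s₀ ≤ s ∧ Int.fract ((m:ℝ)^s * p) < ((m:ℝ) - 1)/m := by
  have hm1 : (1:ℝ) < m := by exact_mod_cast hm
  have hm0 : (0:ℝ) < m := by linarith
  have hhigh : ∀ s : ℕ, Int.fract ((m:ℝ)^s * p) ≤ 1 - Cf := by
    intro s
    have h := key s (⌊(m:ℝ)^s * p⌋ + 1)
    have e : (m:ℝ)^s * p - ((⌊(m:ℝ)^s * p⌋ + 1 : ℤ) : ℝ)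
        = Int.fract ((m:ℝ)^s * p) - 1 := by
      rw [Int.fract]; push_cast; ring
    rw [e, abs_sub_comm, abs_of_nonneg (by linarith [Int.fract_lt_one ((m:ℝ)^s * p)])] at h
    linarith
  have hstep : ∀ s : ℕ, ((m:ℝ) - 1)/m ≤ Int.fract ((m:ℝ)^s * p) →
      1 - Int.fract ((m:ℝ)^(s+1) * p) = m * (1 - Int.fract ((m:ℝ)^s * p)) := by
    intro s hx
    set y := (m:ℝ)^s * p with hy
    set x := Int.fract y with hxdef
    have hx1 : x < 1 := Int.fract_lt_one y
    have hmx : ⌊(m:ℝ) * x⌋ = (m:ℤ) - 1 := by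
      rw [Int.floor_eq_iff]
      constructor
      · push_cast
        have := mul_le_mul_of_nonneg_left hx (le_of_lt hm0)
        rw [mul_div_cancel₀] at this
        · linarith
        · linarith
      · push_cast
        nlinarith
    have hsplit : (m:ℝ)^(s+1) * p = ((m:ℤ) * ⌊y⌋ : ℤ) + (m:ℝ) * x := by
      push_cast
      have : ((⌊y⌋ : ℝ) + x) = y := Int.floor_add_fract y
      rw [pow_succ]
      nlinarith [this]
    rw [hsplit, Int.fract_intCast_add, Int.fract]
    rw [hmx]
    push_cast
    ring
  by_contra hcon
  push_neg at hcon
  obtain ⟨t, ht⟩ := pow_unbounded_of_one_lt (1/Cf) hm1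
  have hind : ∀ i : ℕ, (m:ℝ)^i * Cf ≤ 1 - Int.fract ((m:ℝ)^(s₀+i) * p) := by
    intro i
    induction i with
    | zero => simpa using by linarith [hhigh s₀]
    | succ i ih =>
      have hge := hcon (s₀ + i) (by omega)
      rw [show s₀ + (i+1) = (s₀ + i) + 1 by omega, hstep (s₀+i) hge]
      rw [pow_succ]
      nlinarith [ih]
  have h1 := hind t
  have hlt : 1 < (m:ℝ)^t * Cf := by
    rw [div_lt_iff₀ hCf] at ht
    linarith
  have h2 := Int.fract_nonneg ((m:ℝ)^(s₀+t) * p)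
  linarith

set_option maxHeartbeats 1000000 in
/-- If `n ≥ 3`, `m ≥ 2`, `log n / log m` is irrational and `1/n` is `m`-far, then the
constructed `n`-adic doubling measure `μ` is not `m`-adic doubling: for every `C` there
exist an `m`-adic interval and two of its `m`-adic children `J₁, J₂` with
`μ(J₁)/μ(J₂) > C`. -/
theorem stmt17 (n m : ℕ) (hn : 3 ≤ n) (hm : 2 ≤ m)
    (hirr : Irrational (Real.log n / Real.log m))
    (hfar : IsNFar m (1 / (n : ℝ)))
    (a b : ℝ) (hab : a + b = 2) (ha : 0 < a) (ha1 : a < 1) (hb1 : 1 < b) :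
    ∀ C : ℝ, ∃ (ℓ k : ℤ) (j₁ j₂ : ℕ), 1 ≤ j₁ ∧ j₁ ≤ m ∧ 1 ≤ j₂ ∧ j₂ ≤ m ∧
      C < (constrMeasure n a b (adicChild m ℓ k j₁)).toReal /
            (constrMeasure n a b (adicChild m ℓ k j₂)).toReal := by
  intro C
  obtain ⟨Cf, hCf, hfarC⟩ := hfar
  have hn3 : (3 : ℝ) ≤ (n : ℝ) := by exact_mod_cast hn
  have hm2 : (2 : ℝ) ≤ (m : ℝ) := by exact_mod_cast hm
  have hn0 : (0:ℝ) < n := by linarith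
  have hm1 : (1:ℝ) < m := by linarith
  have hm0 : (0:ℝ) < m := by linarith
  have hb0 : (0:ℝ) < b := by linarith
  -- choose ℓ so that a * Cf * b ^ ℓ > C
  obtain ⟨ℓ, hℓ⟩ := pow_unbounded_of_one_lt ((|C| + 1) / (a * Cf)) hb1
  have haCf : 0 < a * Cf := by positivity
  have hCab : C < a * Cf * b ^ ℓ := by
    rw [div_lt_iff₀ haCf] at hℓ
    have h1 : C ≤ |C| := le_abs_self C
    nlinarith [hℓ, h1]
  obtain ⟨p, hp⟩ : ∃ p : ℝ, p = (ℓ : ℝ) + 1 / n := ⟨_, rfl⟩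
  -- the key distance bound
  have key : ∀ (s : ℕ) (K : ℤ), Cf ≤ |(m:ℝ) ^ s * p - K| := by
    intro s K
    have hms : (0:ℝ) < (m:ℝ) ^ s := by positivity
    have h := hfarC s (K - (m:ℤ) ^ s * ℓ)
    have heq : (1:ℝ) / n - ((K - (m:ℤ) ^ s * ℓ : ℤ) : ℝ) / (m:ℝ) ^ s
        = ((m:ℝ) ^ s * p - K) / (m:ℝ) ^ s := by
      rw [hp]
      push_cast
      field_simp
      ring
    rw [heq, abs_div, abs_of_pos hms, div_le_div_iff_of_pos_right hms] at h
    exact h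
  -- choose scale s₀ with m^(s₀) ≥ 2 n^(ℓ+1), then a good scale s
  obtain ⟨s₀, hs₀⟩ := pow_unbounded_of_one_lt (2 * (n:ℝ) ^ (ℓ+1)) hm1
  obtain ⟨s, hss₀, hfs⟩ := goodScale m hm p Cf hCf key s₀
  have hA : 2 * (n:ℝ) ^ (ℓ+1) ≤ (m:ℝ) ^ (s+1) := by
    calc 2 * (n:ℝ) ^ (ℓ+1) ≤ (m:ℝ) ^ s₀ := le_of_lt hs₀
    _ ≤ (m:ℝ) ^ (s+1) := pow_le_pow_right₀ (by linarith) (by omega)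
  obtain ⟨K, hK⟩ : ∃ K : ℤ, K = ⌊(m:ℝ) ^ s * p⌋ := ⟨_, rfl⟩
  obtain ⟨x, hx⟩ : ∃ x : ℝ, x = Int.fract ((m:ℝ) ^ s * p) := ⟨_, rfl⟩
  rw [← hx] at hfs
  have hKx : (m:ℝ) ^ s * p = (K:ℝ) + x := by
    rw [hK, hx, Int.fract]; ring
  have hx0 : 0 ≤ x := by rw [hx]; exact Int.fract_nonneg _
  have hx1 : x < 1 := by rw [hx]; exact Int.fract_lt_one _
  obtain ⟨d, hd⟩ : ∃ d : ℤ, d = ⌊(m:ℝ) * x⌋ := ⟨_, rfl⟩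
  have hd0 : 0 ≤ d := by
    rw [hd]; exact Int.floor_nonneg.mpr (mul_nonneg (le_of_lt hm0) hx0)
  have hdle : (d:ℝ) ≤ (m:ℝ) * x := by rw [hd]; exact Int.floor_le _
  have hdgt : (m:ℝ) * x < (d:ℝ) + 1 := by rw [hd]; exact Int.lt_floor_add_one _
  have hdm : d ≤ (m:ℤ) - 2 := by
    have h1 : (m:ℝ) * x < (m:ℝ) - 1 := by
      have h2 := mul_lt_mul_of_pos_left hfs hm0
      rw [mul_div_cancel₀] at h2
      · linarith
      · linarith
    have h2 : (d:ℝ) < (m:ℝ) - 1 := lt_of_le_of_lt hdle h1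
    have h3 : d < (m:ℤ) - 1 := by exact_mod_cast h2
    omega
  -- geometry
  have hM : (0:ℝ) < (m:ℝ) ^ (s+1) := by positivity
  have hMs : (0:ℝ) < (m:ℝ) ^ s := by positivity
  obtain ⟨h, hh⟩ : ∃ h : ℝ, h = 1 / (m:ℝ) ^ (s+1) := ⟨_, rfl⟩
  have hhpos : 0 < h := by rw [hh]; positivity
  obtain ⟨u, hu⟩ : ∃ u : ℝ, u = (K:ℝ) / (m:ℝ) ^ s + (d:ℝ) / (m:ℝ) ^ (s+1) := ⟨_, rfl⟩
  obtain ⟨D, hD⟩ : ∃ D : ℝ, D = (m:ℝ) * x - (d:ℝ) := ⟨_, rfl⟩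
  have hD0 : 0 ≤ D := by rw [hD]; linarith
  have hD1 : D < 1 := by rw [hD]; linarith
  have hDC : Cf ≤ D := by
    have h1 := key (s+1) ((m:ℤ) * K + d)
    have h2 : (m:ℝ) ^ (s+1) * p - (((m:ℤ) * K + d : ℤ):ℝ) = D := by
      rw [hD]
      push_cast
      rw [pow_succ]
      linear_combination (m:ℝ) * hKx
    rw [h2, abs_of_nonneg hD0] at h1
    exact h1
  have e_pu : p - u = D / (m:ℝ) ^ (s+1) := by
    have hpe : p = ((K:ℝ) + x) / (m:ℝ) ^ s := by
      rw [eq_div_iff (ne_of_gt hMs)]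
      linear_combination hKx
    rw [hu, hD, hpe, pow_succ]
    field_simp
    ring
  have hDM : D / (m:ℝ)^(s+1) < 1 / (m:ℝ)^(s+1) := (div_lt_div_iff_of_pos_right hM).mpr hD1
  have hDM0 : 0 ≤ D / (m:ℝ)^(s+1) := div_nonneg hD0 (le_of_lt hM)
  have hup : u ≤ p := by linarith [e_pu, hDM0]
  have hpu_lt : p < u + h := by rw [hh]; linarith [e_pu, hDM]
  have hpuC : Cf * h ≤ p - u := by
    rw [e_pu, hh, mul_one_div]
    exact (div_le_div_iff_of_pos_right hM).mpr hDC
  have hNp : (0:ℝ) < (n:ℝ)^(ℓ+1) := pow_pos hn0 _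
  have h2h : 2 * h ≤ 1 / (n:ℝ)^(ℓ+1) := by
    rw [hh, mul_one_div, div_le_div_iff₀ hM hNp]
    linarith only [hA]
  have hhn : h ≤ 1 / (n:ℝ)^(ℓ+1) := by linarith
  -- density on the two strips
  have hLdens : ∀ y ∈ Set.Ico u p, constrDens n a b y = a * b ^ ℓ := by
    intro y hy
    apply densLeft n hn a b ℓ y
    · rw [← hp]; linarith [hy.1, hpu_lt, hh]
    · rw [← hp]; exact hy.2
  have hRdens : ∀ y ∈ Set.Ico p (u + 2*h), constrDens n a b y = 1 := by
    intro y hy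
    apply densRight n hn a b ℓ y
    · rw [← hp]; exact hy.1
    · rw [← hp]; linarith [hy.2]
  -- measures of the two children
  have hμ2 : (constrMeasure n a b (Set.Ico (u+h) (u+2*h))).toReal = h := by
    rw [measIcoConst n a b (fun y hy =>
      hRdens y ⟨by linarith [hy.1], hy.2⟩)]
    rw [ENNReal.toReal_mul, ENNReal.toReal_ofReal (by norm_num),
      ENNReal.toReal_ofReal (by linarith)]
    ring
  have habl : (0:ℝ) < a * b ^ ℓ := by positivity
  have hμ1 : (constrMeasure n a b (Set.Ico u (u+h))).toReal
      = a * b ^ ℓ * (p - u) + (u + h - p) := by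
    have hsplitIco : Set.Ico u (u+h) = Set.Ico u p ∪ Set.Ico p (u+h) :=
      (Set.Ico_union_Ico_eq_Ico hup (le_of_lt hpu_lt)).symm
    rw [hsplitIco, measure_union Set.Ico_disjoint_Ico_same measurableSet_Ico]
    rw [measIcoConst n a b hLdens,
      measIcoConst n a b (fun y hy => hRdens y ⟨hy.1, by linarith [hy.2, hhpos]⟩)]
    rw [← ENNReal.ofReal_mul (le_of_lt habl), ← ENNReal.ofReal_mul (by norm_num : (0:ℝ) ≤ 1)]
    have hn1 : (0:ℝ) ≤ a * b ^ ℓ * (p - u) := mul_nonneg (le_of_lt habl) (by linarith)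
    have hn2 : (0:ℝ) ≤ 1 * (u + h - p) := by linarith
    rw [← ENNReal.ofReal_add hn1 hn2]
    rw [ENNReal.toReal_ofReal (by linarith)]
    ring
  -- the children as adic intervals
  refine ⟨(s:ℤ), K+1, d.toNat+1, d.toNat+2, by omega, by omega, by omega, by omega, ?_⟩
  have hzc : ((m:ℝ)) ^ ((s:ℤ)) = (m:ℝ)^s := zpow_natCast _ _
  have hzc1 : ((m:ℝ)) ^ ((s:ℤ)+1) = (m:ℝ)^(s+1) := by
    rw [show (s:ℤ)+1 = ((s+1:ℕ):ℤ) by push_cast; ring, zpow_natCast]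
  have hdt : ((d.toNat : ℕ) : ℝ) = (d:ℝ) := by exact_mod_cast Int.toNat_of_nonneg hd0
  have hchild1 : adicChild m (s:ℤ) (K+1) (d.toNat+1) = Set.Ico u (u+h) := by
    unfold adicChild
    rw [hzc, hzc1, hu, hh]
    congr 1 <;> push_cast [hdt] <;> ring
  have hchild2 : adicChild m (s:ℤ) (K+1) (d.toNat+2) = Set.Ico (u+h) (u+2*h) := by
    unfold adicChild
    rw [hzc, hzc1, hu, hh]
    congr 1 <;> push_cast [hdt] <;> ring
  rw [hchild1, hchild2, hμ1, hμ2, lt_div_iff₀ hhpos]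
  have t1 : C * h < (a*Cf*b^ℓ) * h := mul_lt_mul_of_pos_right hCab hhpos
  have t2 : a*b^ℓ*(Cf*h) ≤ a*b^ℓ*(p-u) := mul_le_mul_of_nonneg_left hpuC (le_of_lt habl)
  linarith only [t1, t2, hpu_lt]
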